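/- Let x, y ∈ R^{m+n} be such that, when sorted non-increasingly, x^↓ = (x'^↓, x''^↓) and y^↓ = (y'^↓, y''^↓) for vectors x', y' ∈ R^m and x'', y'' ∈ R^n (i.e., the sorted versions split as concatenations of the sorted blocks). If x ≺ y and x' ≺ y', then x'' ≺ y''. -/

import Mathlib

open Finset

/-- `eSum v m` is the sum of the `m` largest entries of `v`
(the supremum of sums over subsets of cardinality `m`). -/
noncomputable def eSum {ι : Type} [Fintype ι] (v : ι → ℝ) (m : ℕ) : ℝ :=
  sSup {x | ∃ s : Finset ι, s.card = m ∧ x = ∑ i ∈ s, v i}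

/-- Majorization `x ≺ y`: partial sums of largest entries of `x` are dominated
by those of `y`, with equal total sums. -/
def Maj {ι κ : Type} [Fintype ι] [Fintype κ] (x : ι → ℝ) (y : κ → ℝ) : Prop :=
  (∀ m : ℕ, 1 ≤ m → m < Fintype.card ι → eSum x m ≤ eSum y m) ∧
    ∑ i, x i = ∑ j, y j

/-- Strict majorization `x ◁ y`: all inequalities strict, total sums equal. -/
def SMaj {ι κ : Type} [Fintype ι] [Fintype κ] (x : ι → ℝ) (y : κ → ℝ) : Prop :=
  (∀ m : ℕ, 1 ≤ m → m < Fintype.card ι → eSum x m < eSum y m) ∧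
    ∑ i, x i = ∑ j, y j

/-- Global uniformity: smallest entry divided by largest entry. -/
noncomputable def gu {ι : Type} [Fintype ι] (v : ι → ℝ) : ℝ :=
  sInf (Set.range v) / sSup (Set.range v)

/-- The set of ratios `v b / v a` over consecutive distinct values `v b < v a`
(no value strictly in between). -/
def ratioSet {ι : Type} [Fintype ι] (v : ι → ℝ) : Set ℝ :=
  {r | ∃ a b : ι, v b < v a ∧ (¬ ∃ c : ι, v b < v c ∧ v c < v a) ∧ r = v b / v a}

open Classical in
noncomputable def lu {ι : Type} [Fintype ι] (v : ι → ℝ) : ℝ :=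
  if (∃ a b : ι, v a ≠ v b) then sInf (ratioSet v) else 1

open Classical in
/-- Maximal local uniformity: maximum ratio of consecutive distinct values;
`1` for a constant vector. -/
noncomputable def Lu {ι : Type} [Fintype ι] (v : ι → ℝ) : ℝ :=
  if (∃ a b : ι, v a ≠ v b) then sSup (ratioSet v) else 1

/-- Tensor (Kronecker) product of two vectors. -/
def tens {ι κ : Type} (x : ι → ℝ) (y : κ → ℝ) : ι × κ → ℝ :=
  fun p => x p.1 * y p.2

/-- `k`-fold tensor power of a vector. -/
def tpow {n : ℕ} (v : Fin n → ℝ) (k : ℕ) : (Fin k → Fin n) → ℝ :=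
  fun f => ∏ i, v (f i)

/-- A probability vector: nonnegative entries summing to one. -/
def IsProb {ι : Type} [Fintype ι] (v : ι → ℝ) : Prop :=
  (∀ i, 0 ≤ v i) ∧ ∑ i, v i = 1

/-- `v` sorted in non-increasing order. -/
noncomputable def sortDesc {n : ℕ} (v : Fin n → ℝ) : Fin n → ℝ :=
  fun i => v (Tuple.sort v i.rev)

/-- Shannon entropy (base 2), with the convention `0 log 0 = 0`. -/
noncomputable def entH {ι : Type} [Fintype ι] (v : ι → ℝ) : ℝ :=
  -∑ i, v i * Real.logb 2 (v i)


/-!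
The `card ι + k` largest entries of `Sum.elim u w`, where every entry of `w` is at most every
entry of `u`, are all of `u` together with the `k` largest entries of `w`: any other choice can
trade its surplus entries of `w` for the missing entries of `u` without decreasing the sum. Hence
`eSum (Sum.elim u w) (card ι + k) = ∑ u + eSum w k`, and the inequality for `Sum.elim x' x''`
at `m + k`, minus the equality of totals `∑ x' = ∑ y'`, is the inequality for `x''` at `k`.
-/

theorem Finset.sum_le_sum_of_card_eq_of_forall_le {α β M : Type*} [AddCommMonoid M] [LinearOrder M]
    [IsOrderedAddMonoid M] {s : Finset α} {t : Finset β} {f : α → M} {g : β → M}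
    (hcard : #s = #t) (h : ∀ a ∈ s, ∀ b ∈ t, f a ≤ g b) :
    ∑ a ∈ s, f a ≤ ∑ b ∈ t, g b := by
  rcases s.eq_empty_or_nonempty with rfl | hs
  · rw [card_empty, eq_comm, card_eq_zero] at hcard
    simp [hcard]
  obtain ⟨a, ha, hmax⟩ := s.exists_mem_eq_sup' hs f
  calc ∑ a ∈ s, f a ≤ #s • s.sup' hs f := sum_le_card_nsmul _ _ _ fun a' ha' => le_sup' f ha'
    _ = #t • f a := by rw [hcard, hmax]
    _ ≤ ∑ b ∈ t, g b := card_nsmul_le_sum _ _ _ fun b hb => h a ha b hb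

section eSum

variable {ι κ : Type} [Fintype ι] [Fintype κ]

theorem finite_setOf_sum_card_eq (v : ι → ℝ) (m : ℕ) :
    {x | ∃ s : Finset ι, #s = m ∧ x = ∑ i ∈ s, v i}.Finite :=
  (Set.finite_range fun s : Finset ι => ∑ i ∈ s, v i).subset <| by
    rintro _ ⟨s, -, rfl⟩
    exact ⟨s, rfl⟩

theorem sum_le_eSum (v : ι → ℝ) (s : Finset ι) : ∑ i ∈ s, v i ≤ eSum v #s :=
  le_csSup (finite_setOf_sum_card_eq v _).bddAbove ⟨s, rfl, rfl⟩

theorem exists_card_eq_eSum_eq_sum (v : ι → ℝ) {m : ℕ} (hm : m ≤ Fintype.card ι) :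
    ∃ s : Finset ι, #s = m ∧ eSum v m = ∑ i ∈ s, v i := by
  obtain ⟨s, -, hs⟩ := exists_subset_card_eq (s := (univ : Finset ι)) (by simpa using hm)
  obtain ⟨t, ht, hsum⟩ : eSum v m ∈ {x | ∃ s : Finset ι, #s = m ∧ x = ∑ i ∈ s, v i} :=
    Set.Nonempty.csSup_mem ⟨_, s, hs, rfl⟩ (finite_setOf_sum_card_eq v m)
  exact ⟨t, ht, hsum⟩

variable {u : ι → ℝ} {w : κ → ℝ}

theorem sum_sumElim_le_sum_add_eSum (h : ∀ i j, w j ≤ u i) {k : ℕ}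
    (s : Finset (ι ⊕ κ)) (hs : #s = Fintype.card ι + k) :
    ∑ p ∈ s, Sum.elim u w p ≤ ∑ i, u i + eSum w k := by
  classical
  have hcard : #s.toLeft + #s.toRight = Fintype.card ι + k := by
    rw [card_toLeft_add_card_toRight, hs]
  have hleft : #s.toLeft ≤ Fintype.card ι := card_le_univ _
  obtain ⟨t, hts, htk⟩ := exists_subset_card_eq (s := s.toRight) (n := k) (by omega)
  have hexchange : ∑ j ∈ s.toRight \ t, w j ≤ ∑ i ∈ s.toLeftᶜ, u i :=
    sum_le_sum_of_card_eq_of_forall_le (by rw [card_sdiff_of_subset hts, card_compl]; omega)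
      fun j _ i _ => h i j
  calc ∑ p ∈ s, Sum.elim u w p
      = ∑ i ∈ s.toLeft, u i + (∑ j ∈ s.toRight \ t, w j + ∑ j ∈ t, w j) := by
        rw [sum_sdiff hts, ← sum_sumElim, toLeft_disjSum_toRight]
    _ ≤ ∑ i ∈ s.toLeft, u i + (∑ i ∈ s.toLeftᶜ, u i + eSum w k) := by
        gcongr
        exact htk ▸ sum_le_eSum w t
    _ = ∑ i, u i + eSum w k := by rw [← add_assoc, sum_add_sum_compl]

theorem eSum_sumElim_card_add (h : ∀ i j, w j ≤ u i) {k : ℕ} (hk : k ≤ Fintype.card κ) :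
    eSum (Sum.elim u w) (Fintype.card ι + k) = ∑ i, u i + eSum w k := by
  obtain ⟨s, hs, hsum⟩ := exists_card_eq_eSum_eq_sum (Sum.elim u w) (m := Fintype.card ι + k)
    (by rw [Fintype.card_sum]; omega)
  refine le_antisymm (hsum ▸ sum_sumElim_le_sum_add_eSum h s hs) ?_
  obtain ⟨t, htk, ht⟩ := exists_card_eq_eSum_eq_sum w hk
  have := sum_le_eSum (Sum.elim u w) (univ.disjSum t)
  rwa [card_disjSum, card_univ, htk, sum_sumElim, ← ht] at this

end eSum

/-- if the sorted versions split into blocks (every entry of the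
second block is at most every entry of the first), `x ≺ y` and `x' ≺ y'`,
then `x'' ≺ y''`. -/
theorem majorization_block_cancel {m n : ℕ} (x' y' : Fin m → ℝ) (x'' y'' : Fin n → ℝ)
    (hx : ∀ (i : Fin m) (j : Fin n), x'' j ≤ x' i)
    (hy : ∀ (i : Fin m) (j : Fin n), y'' j ≤ y' i)
    (hmaj : Maj (Sum.elim x' x'') (Sum.elim y' y''))
    (h' : Maj x' y') : Maj x'' y'' := by
  have hsum' : ∑ i, x' i = ∑ i, y' i := h'.2
  refine ⟨fun k hk1 hkn => ?_, ?_⟩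
  · have hblock := hmaj.1 (Fintype.card (Fin m) + k) (by omega)
      (by rw [Fintype.card_sum]; omega)
    rw [eSum_sumElim_card_add hx hkn.le, eSum_sumElim_card_add hy hkn.le, hsum'] at hblock
    linarith
  · have htotal := hmaj.2
    rw [Fintype.sum_sum_type, Fintype.sum_sum_type] at htotal
    simp only [Sum.elim_inl, Sum.elim_inr, hsum'] at htotal
    linarith
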